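/- Define for a multi-index \underline{i} ∈ ℤ_{≥0}^∞ with |\underline{i}| = n ≥ 3 the number ⟨τ^{\underline{i}}⟩₀ = (n-3)!/∏_α λ_α(\underline{i})! · δ_{|λ(\underline{i})|, n-3}, where λ(\underline{i}) lists each index k with multiplicity i_k and |λ| is the sum of the entries. Writing ⟨τ_{a}τ_b τ_c τ^{\underline{i}}⟩₀ for the number associated to the multi-index obtained from \underline{i} by adding one to entries a, b, c, the genus-zero topological recursion relation holds: for all a, b, c ≥ 0 and all multi-indices \underline{i}, (1/\underline{i}!)·⟨τ_{a+1}τ_b τ_c τ^{\underline{i}}⟩₀ = ∑_{\underline{i}' + \underline{i}'' = \underline{i}} (1/(\underline{i}'! \underline{i}''!)) · ⟨τ_a τ_0 τ^{\underline{i}'}⟩₀ · ⟨τ_b τ_c τ_0 τ^{\underline{i}''}⟩₀, where \underline{i}! = ∏_k i_k! and the sum runs over all decompositions of \underline{i} as an entrywise sum of two multi-indices. -/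

import Mathlib

/-- Total size `|i| = ∑ i_k` of a multi-index. -/
def mSize (i : ℕ →₀ ℕ) : ℕ := i.sum fun _ m => m

/-- `|λ(i)| = ∑ k·i_k`. -/
def lamSize (i : ℕ →₀ ℕ) : ℕ := i.sum fun k m => k * m

/-- `∏_α λ_α(i)! = ∏_k (k!)^{i_k}`. -/
def lamFact (i : ℕ →₀ ℕ) : ℚ := i.prod fun k m => ((Nat.factorial k : ℚ)) ^ m

/-- `i! = ∏_k i_k!`. -/
def mFact (i : ℕ →₀ ℕ) : ℚ := i.prod fun _ m => (Nat.factorial m : ℚ)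

/-- Genus zero ψ-class intersection number
`⟨τ^i⟩₀ = (n-3)!/∏ λ_α!` if `∑ k·i_k = n - 3` (with `n = |i| ≥ 3`), and `0` otherwise. -/
noncomputable def inter (i : ℕ →₀ ℕ) : ℚ :=
  if lamSize i + 3 = mSize i then (Nat.factorial (mSize i - 3) : ℚ) / lamFact i else 0

/-!
Read a multi-index `s` as a multiset of letters, letter `k` being a step of size `1 - k` of a
lattice walk; every word in the letters of `s` then describes a walk from `0` to `height s`.
After clearing factorials, `⟨τ_b τ_c τ_0 τ^{i''}⟩₀` becomes the multinomial coefficient of `i''`,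
which counts all words, and `⟨τ_a τ_0 τ^{i'}⟩₀` becomes `(a + 1) (|i'| - 1)! / i'!`, which by the
hitting time theorem counts the words whose walk first reaches `a + 1` at its last step. Since no
step exceeds `1`, a word whose walk ends at height at least `r ≥ 0` splits uniquely at its first
passage through `r`. The resulting identity between the two counts is proved by induction on
`|i|`, removing the first letter of a word.
-/

open Finsupp Nat
open Finset.HasAntidiagonal

lemma Finsupp.single_one_le_iff {ι : Type*} {i : ι →₀ ℕ} {k : ι} : single k 1 ≤ i ↔ i k ≠ 0 := by
  rw [single_le_iff, Nat.one_le_iff_ne_zero]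

theorem Finsupp.sum_antidiagonal_sum_support_fst {ι M : Type*} [DecidableEq ι] [AddCommMonoid M]
    (i : ι →₀ ℕ) (f : (ι →₀ ℕ) → (ι →₀ ℕ) → ι → M) :
    ∑ q ∈ antidiagonal i, ∑ k ∈ q.1.support, f (q.1 - single k 1) q.2 k =
      ∑ k ∈ i.support, ∑ q ∈ antidiagonal (i - single k 1), f q.1 q.2 k := by
  rw [Finset.sum_sigma', Finset.sum_sigma']
  refine Finset.sum_nbij' (fun x => ⟨x.2, (x.1.1 - single x.2 1, x.1.2)⟩)
    (fun x => ⟨(x.2.1 + single x.1 1, x.2.2), x.1⟩) ?_ ?_ ?_ ?_ (fun _ _ => rfl)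
  · rintro ⟨⟨q₁, q₂⟩, k⟩ h
    simp only [Finset.mem_sigma, mem_antidiagonal, mem_support_iff] at h ⊢
    obtain ⟨rfl, hk⟩ := h
    refine ⟨?_, tsub_add_eq_add_tsub (single_one_le_iff.2 hk)⟩
    rw [coe_add, Pi.add_apply]
    omega
  · rintro ⟨k, ⟨q₁, q₂⟩⟩ h
    simp only [Finset.mem_sigma, mem_antidiagonal, mem_support_iff] at h ⊢
    obtain ⟨hk, hq⟩ := h
    refine ⟨?_, by simp⟩
    rw [add_right_comm, hq, tsub_add_cancel_of_le (single_one_le_iff.2 hk)]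
  · rintro ⟨⟨q₁, q₂⟩, k⟩ h
    simp only [Finset.mem_sigma, mem_support_iff] at h
    simp [tsub_add_cancel_of_le (single_one_le_iff.2 h.2)]
  · rintro ⟨k, ⟨q₁, q₂⟩⟩ -
    simp

lemma mSize_add (x y : ℕ →₀ ℕ) : mSize (x + y) = mSize x + mSize y :=
  map_add degree x y

lemma mSize_single (k : ℕ) : mSize (single k 1) = 1 :=
  degree_single k 1

lemma mSize_eq_zero_iff {i : ℕ →₀ ℕ} : mSize i = 0 ↔ i = 0 :=
  degree_eq_zero_iff i

lemma lamSize_add (x y : ℕ →₀ ℕ) : lamSize (x + y) = lamSize x + lamSize y :=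
  sum_add_index' (fun _ => mul_zero _) (fun _ _ _ => mul_add _ _ _)

lemma lamSize_single (k : ℕ) : lamSize (single k 1) = k := by
  simp [lamSize]

lemma lamFact_add (x y : ℕ →₀ ℕ) : lamFact (x + y) = lamFact x * lamFact y :=
  prod_add_index' (fun _ => pow_zero _) (fun _ _ _ => pow_add _ _ _)

lemma lamFact_single (k : ℕ) : lamFact (single k 1) = k ! := by
  simp [lamFact]

lemma lamFact_pos (i : ℕ →₀ ℕ) : 0 < lamFact i :=
  Finset.prod_pos fun _ _ => by positivity

lemma mFact_pos (i : ℕ →₀ ℕ) : 0 < mFact i :=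
  Finset.prod_pos fun _ _ => by positivity

lemma mFact_add_single (i : ℕ →₀ ℕ) (k : ℕ) :
    mFact (i + single k 1) = (i k + 1) * mFact i := by
  have hg : ∀ _ : ℕ, ((0 ! : ℕ) : ℚ) = 1 := fun _ => by simp
  have h₁ := mul_prod_erase' (i + single k 1) k (fun _ m => (m ! : ℚ)) hg
  have h₂ := mul_prod_erase' i k (fun _ m => (m ! : ℚ)) hg
  rw [erase_add, erase_single, add_zero] at h₁
  simp only [mFact, ← h₁, ← h₂, coe_add, Pi.add_apply, single_eq_same, factorial_succ]
  push_cast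
  ring

lemma mFact_single (k : ℕ) : mFact (single k 1) = 1 := by
  simp [mFact]

lemma multinomial_eq_div (i : ℕ →₀ ℕ) : (i.multinomial : ℚ) = (mSize i)! / mFact i := by
  rw [eq_div_iff (mFact_pos i).ne', mul_comm]
  simp only [mFact, mSize, Finsupp.prod, Finsupp.sum, multinomial_eq]
  exact_mod_cast Nat.multinomial_spec i.support i

def height (i : ℕ →₀ ℕ) : ℤ := mSize i - lamSize i

lemma height_add (x y : ℕ →₀ ℕ) : height (x + y) = height x + height y := by
  simp only [height, mSize_add, lamSize_add]
  push_cast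
  ring

lemma height_single (k : ℕ) : height (single k 1) = 1 - k := by
  simp [height, mSize_single, lamSize_single]

lemma height_zero : height 0 = 0 := by
  simp [height, mSize, lamSize]

section SubSingle

variable {i : ℕ →₀ ℕ} {k : ℕ}

lemma mSize_sub_single_add_one (hk : i k ≠ 0) : mSize (i - single k 1) + 1 = mSize i := by
  nth_rw 2 [← mSize_single k]
  rw [← mSize_add, tsub_add_cancel_of_le (single_one_le_iff.2 hk)]

lemma mFact_eq_mul_mFact_sub_single (hk : i k ≠ 0) :
    mFact i = i k * mFact (i - single k 1) := by
  conv_lhs => rw [← tsub_add_cancel_of_le (single_one_le_iff.2 hk)]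
  rw [mFact_add_single, tsub_apply, single_eq_same, Nat.cast_sub (Nat.one_le_iff_ne_zero.2 hk)]
  ring

lemma height_sub_single (hk : i k ≠ 0) :
    height (i - single k 1) = height i + k - 1 := by
  conv_rhs => rw [← tsub_add_cancel_of_le (single_one_le_iff.2 hk), height_add, height_single]
  ring

end SubSingle

lemma cast_mSize_eq_sum (i : ℕ →₀ ℕ) : (mSize i : ℚ) = ∑ k ∈ i.support, (i k : ℚ) := by
  simp [mSize, Finsupp.sum]

lemma cast_lamSize_eq_sum (i : ℕ →₀ ℕ) : (lamSize i : ℚ) = ∑ k ∈ i.support, (k * i k : ℚ) := by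
  simp [lamSize, Finsupp.sum]

lemma multinomial_eq_sum_sub_single {i : ℕ →₀ ℕ} (hi : i ≠ 0) :
    (i.multinomial : ℚ) = ∑ k ∈ i.support, ((i - single k 1).multinomial : ℚ) := by
  have hterm : ∀ k ∈ i.support,
      ((i - single k 1).multinomial : ℚ) = i k * ((mSize i - 1)! / mFact i) := by
    intro k hk
    have hk : i k ≠ 0 := mem_support_iff.1 hk
    rw [multinomial_eq_div, mFact_eq_mul_mFact_sub_single hk,
      ← Nat.eq_sub_of_add_eq (mSize_sub_single_add_one hk)]
    field_simp [(mFact_pos (i - single k 1)).ne', show (i k : ℚ) ≠ 0 by exact_mod_cast hk]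
  rw [Finset.sum_congr rfl hterm, ← Finset.sum_mul, ← cast_mSize_eq_sum, multinomial_eq_div,
    ← Nat.mul_factorial_pred (mSize_eq_zero_iff.not.2 hi)]
  push_cast
  ring

lemma sum_support_mul_eq_of_height_eq {s : ℕ →₀ ℕ} {r : ℤ} (hs : height s = r) :
    ∑ k ∈ s.support, ((r + k - 1) * s k : ℚ) = r * (mSize s - 1) := by
  have hL : (lamSize s : ℚ) = mSize s - r := by
    rw [← hs, height]
    push_cast
    ring
  simp only [add_sub_right_comm, add_mul, Finset.sum_add_distrib, sub_one_mul,
    Finset.sum_sub_distrib, ← Finset.mul_sum, ← cast_mSize_eq_sum, ← cast_lamSize_eq_sum, hL]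
  ring

/-- The number of words in the letters of `s` whose walk first reaches `r` at its last step; for
`r = 0` only the empty word qualifies. -/
noncomputable def firstPassage (s : ℕ →₀ ℕ) (r : ℤ) : ℚ :=
  if height s = r then (if s = 0 then 1 else r * (mSize s - 1)! / mFact s) else 0

lemma firstPassage_zero_right (s : ℕ →₀ ℕ) : firstPassage s 0 = if s = 0 then 1 else 0 := by
  unfold firstPassage
  split_ifs <;> simp_all [height_zero]

lemma eq_single_of_mSize_eq_one {s : ℕ →₀ ℕ} {k : ℕ} (hs : mSize s = 1) (hk : s k ≠ 0) :
    s = single k 1 := by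
  have := mSize_sub_single_add_one hk
  rw [← tsub_add_cancel_of_le (single_one_le_iff.2 hk),
    mSize_eq_zero_iff.1 (show mSize (s - single k 1) = 0 by omega), zero_add]

lemma firstPassage_sub_single {s : ℕ →₀ ℕ} {r : ℤ} {k : ℕ} (hw : height s = r)
    (hs : 2 ≤ mSize s) (hk : s k ≠ 0) :
    firstPassage (s - single k 1) (r + k - 1) = (r + k - 1) * s k * ((mSize s - 2)! / mFact s) := by
  have hn := mSize_sub_single_add_one hk
  have hsk : s - single k 1 ≠ 0 := fun h => by
    rw [h, mSize_eq_zero_iff.2 rfl] at hn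
    omega
  rw [firstPassage, if_pos (by rw [height_sub_single hk, hw]), if_neg hsk,
    mFact_eq_mul_mFact_sub_single hk, show mSize s - 2 = mSize (s - single k 1) - 1 by omega]
  push_cast
  field_simp [(mFact_pos (s - single k 1)).ne', show (s k : ℚ) ≠ 0 by exact_mod_cast hk]

lemma firstPassage_eq_sum {r : ℤ} (hr : 1 ≤ r) (s : ℕ →₀ ℕ) :
    firstPassage s r = ∑ k ∈ s.support, firstPassage (s - single k 1) (r + k - 1) := by
  by_cases hw : height s = r
  swap
  · refine (if_neg hw).trans (Finset.sum_eq_zero fun k hk => if_neg ?_).symm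
    rw [height_sub_single (mem_support_iff.1 hk)]
    omega
  have hs : s ≠ 0 := by
    rintro rfl
    rw [height_zero] at hw
    omega
  obtain ⟨k₀, hk₀⟩ := support_nonempty_iff.2 hs
  obtain hn | hn : mSize s = 1 ∨ 2 ≤ mSize s := by
    have := mSize_eq_zero_iff.not.2 hs
    omega
  · obtain rfl := eq_single_of_mSize_eq_one hn (mem_support_iff.1 hk₀)
    obtain ⟨rfl, rfl⟩ : k₀ = 0 ∧ r = 1 := by
      rw [height_single] at hw
      omega
    simp [firstPassage, height_single, height_zero, mSize_single, mFact_single]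
  have hfact : ((mSize s - 1)! : ℚ) = (mSize s - 1) * (mSize s - 2)! := by
    rw [← Nat.mul_factorial_pred (by omega : mSize s - 1 ≠ 0)]
    push_cast [show 1 ≤ mSize s by omega]
    rfl
  rw [Finset.sum_congr rfl fun k hk => firstPassage_sub_single hw hn (mem_support_iff.1 hk),
    ← Finset.sum_mul, sum_support_mul_eq_of_height_eq hw, firstPassage, if_pos hw, if_neg hs,
    hfact]
  ring

theorem sum_antidiagonal_firstPassage_mul_multinomial (i : ℕ →₀ ℕ) {r : ℤ} (hr₀ : 0 ≤ r)
    (hr : r ≤ height i) :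
    ∑ q ∈ antidiagonal i, firstPassage q.1 r * q.2.multinomial = i.multinomial := by
  induction h : mSize i using Nat.strong_induction_on generalizing i r with
  | _ n ih =>
  rcases hr₀.eq_or_lt with rfl | hr₁
  · rw [Finset.sum_eq_single_of_mem (0, i) (by simp)]
    · simp [firstPassage_zero_right]
    · rintro ⟨q₁, q₂⟩ hq hne
      obtain rfl | hq₁ := eq_or_ne q₁ 0
      · simp_all
      · simp [firstPassage_zero_right, hq₁]
  have hi : i ≠ 0 := by
    rintro rfl
    rw [height_zero] at hr
    omega
  calc ∑ q ∈ antidiagonal i, firstPassage q.1 r * q.2.multinomial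
      = ∑ q ∈ antidiagonal i, ∑ k ∈ q.1.support,
          firstPassage (q.1 - single k 1) (r + k - 1) * q.2.multinomial := by
        simp_rw [firstPassage_eq_sum hr₁, Finset.sum_mul]
    _ = ∑ k ∈ i.support, ∑ q ∈ antidiagonal (i - single k 1),
          firstPassage q.1 (r + k - 1) * q.2.multinomial :=
        sum_antidiagonal_sum_support_fst i fun a b k => firstPassage a (r + k - 1) * b.multinomial
    _ = ∑ k ∈ i.support, ((i - single k 1).multinomial : ℚ) := by
        refine Finset.sum_congr rfl fun k hk => ?_
        have hk : i k ≠ 0 := mem_support_iff.1 hk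
        have := mSize_sub_single_add_one hk
        exact ih _ (by omega) _ (by omega) (by rw [height_sub_single hk]; omega) rfl
    _ = i.multinomial := (multinomial_eq_sum_sub_single hi).symm

lemma inter_eq_ite (s : ℕ →₀ ℕ) :
    inter s = if height s = 3 then ((mSize s - 3)! : ℚ) / lamFact s else 0 := by
  simp only [inter, height]
  congr 1
  exact propext (by omega)

section Evaluation

variable (a b c : ℕ) (p : ℕ →₀ ℕ)

lemma inter_add_three_singles :
    inter (p + single (a + 1) 1 + single b 1 + single c 1) =
      if height p = a + b + c + 1 then
        ((mSize p)! : ℚ) / (lamFact p * (a + 1)! * b ! * c !) else 0 := by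
  simp only [inter_eq_ite, height_add, height_single, mSize_add, mSize_single, lamFact_add,
    lamFact_single]
  congr 1
  exact propext (by push_cast; omega)

lemma inter_add_single_add_single_zero :
    inter (p + single a 1 + single 0 1) =
      if height p = a + 1 then ((mSize p - 1)! : ℚ) / (lamFact p * a !) else 0 := by
  simp only [inter_eq_ite, height_add, height_single, mSize_add, mSize_single, lamFact_add,
    lamFact_single, factorial_zero, Nat.cast_one, mul_one]
  congr 1
  exact propext (by push_cast; omega)

lemma inter_add_two_singles_add_single_zero :
    inter (p + single b 1 + single c 1 + single 0 1) =
      if height p = b + c then ((mSize p)! : ℚ) / (lamFact p * b ! * c !) else 0 := by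
  simp only [inter_eq_ite, height_add, height_single, mSize_add, mSize_single, lamFact_add,
    lamFact_single, factorial_zero, Nat.cast_one, mul_one]
  congr 1
  exact propext (by push_cast; omega)

end Evaluation

section Summand

variable {a b c : ℕ} {i : ℕ →₀ ℕ} {p : (ℕ →₀ ℕ) × (ℕ →₀ ℕ)}

lemma summand_eq_firstPassage_mul_multinomial (hi : height i = a + b + c + 1)
    (hp : p ∈ antidiagonal i) :
    1 / (mFact p.1 * mFact p.2) *
        (inter (p.1 + single a 1 + single 0 1) *
          inter (p.2 + single b 1 + single c 1 + single 0 1)) =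
      firstPassage p.1 (a + 1) * p.2.multinomial / ((a + 1)! * b ! * c ! * lamFact i) := by
  rw [mem_antidiagonal] at hp
  have hsum : height p.1 + height p.2 = height i := by rw [← height_add, hp]
  rw [inter_add_single_add_single_zero, inter_add_two_singles_add_single_zero, firstPassage]
  by_cases h₁ : height p.1 = a + 1
  · have hp₁ : p.1 ≠ 0 := by
      intro h
      rw [h, height_zero] at h₁
      omega
    rw [if_pos h₁, if_pos (by omega), if_pos h₁, if_neg hp₁, multinomial_eq_div, ← hp,
      lamFact_add, factorial_succ]
    have := mFact_pos p.1
    have := mFact_pos p.2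
    have := lamFact_pos p.1
    have := lamFact_pos p.2
    push_cast
    field_simp
  · simp [h₁]

lemma inter_mul_inter_eq_zero (hi : height i ≠ a + b + c + 1) (hp : p ∈ antidiagonal i) :
    inter (p.1 + single a 1 + single 0 1) * inter (p.2 + single b 1 + single c 1 + single 0 1) =
      0 := by
  rw [mem_antidiagonal] at hp
  have hsum : height p.1 + height p.2 = height i := by rw [← height_add, hp]
  rw [inter_add_single_add_single_zero, inter_add_two_singles_add_single_zero]
  split_ifs <;> first | omega | simp

end Summand

/-- Witten's genus zero topological recursion relation:
`(1/i!)·⟨τ_{a+1}τ_bτ_cτ^i⟩₀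
  = ∑_{i'+i''=i} (1/(i'! i''!))·⟨τ_aτ_0τ^{i'}⟩₀·⟨τ_bτ_cτ_0τ^{i''}⟩₀`. -/
theorem topological_recursion (a b c : ℕ) (i : ℕ →₀ ℕ) :
    (1 / mFact i) *
      inter (i + Finsupp.single (a + 1) 1 + Finsupp.single b 1 + Finsupp.single c 1) =
    ∑ p ∈ Finset.HasAntidiagonal.antidiagonal i,
      (1 / (mFact p.1 * mFact p.2)) *
        (inter (p.1 + Finsupp.single a 1 + Finsupp.single 0 1) *
          inter (p.2 + Finsupp.single b 1 + Finsupp.single c 1 + Finsupp.single 0 1)) := by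
  rw [inter_add_three_singles]
  by_cases h : height i = a + b + c + 1
  · rw [Finset.sum_congr rfl fun p hp => summand_eq_firstPassage_mul_multinomial h hp,
      ← Finset.sum_div, sum_antidiagonal_firstPassage_mul_multinomial i (by positivity) (by omega),
      if_pos h, multinomial_eq_div]
    have := mFact_pos i
    have := lamFact_pos i
    field_simp
  · rw [if_neg h, mul_zero]
    exact (Finset.sum_eq_zero fun p hp => by rw [inter_mul_inter_eq_zero h hp, mul_zero]).symm
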